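/- arXiv:1704.05811 — 3 statements merged into one kernel-verified Lean document; each statement's English description precedes it below -/
import Mathlib

section
/- Let m be a positive integer and let a_1, ..., a_m be nonnegative real numbers with a_1 > 0. Then the sum over i from 1 to m of a_i / (a_1 + a_2 + ... + a_i) is at most 1 + ln((a_1 + ... + a_m) / a_1). -/
/-!
Each term after the first is bounded by a logarithmic increment: with `S` the previous prefix sum,
`x / (S + x) = 1 - S / (S + x) ≤ log ((S + x) / S)`. These increments telescope to
`log ((a 1 + ⋯ + a m) / a 1)`, and the first term contributes `a 1 / a 1 = 1`.
-/

open Finset Real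

lemma div_add_le_log_add_sub_log {s x : ℝ} (hs : 0 < s) (hx : 0 ≤ x) :
    x / (s + x) ≤ log (s + x) - log s := by
  have hsx : 0 < s + x := by linarith
  calc x / (s + x) = 1 - ((s + x) / s)⁻¹ := by field_simp; ring
    _ ≤ log ((s + x) / s) := one_sub_inv_le_log_of_pos (div_pos hsx hs)
    _ = log (s + x) - log s := log_div hsx.ne' hs.ne'

theorem sum_range_div_sum_range_le_one_add_log (b : ℕ → ℝ) (hb : ∀ i, 0 ≤ b i) (h0 : 0 < b 0)
    (n : ℕ) :
    ∑ i ∈ range (n + 1), b i / ∑ j ∈ range (i + 1), b j ≤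
      1 + log ((∑ i ∈ range (n + 1), b i) / b 0) := by
  induction n with
  | zero => simp [h0.ne']
  | succ n ih =>
    set S := ∑ i ∈ range (n + 1), b i
    have hS : 0 < S := h0.trans_le (single_le_sum (fun i _ ↦ hb i) (mem_range.2 n.succ_pos))
    have step := div_add_le_log_add_sub_log hS (hb (n + 1))
    rw [sum_range_succ (fun i ↦ b i / ∑ j ∈ range (i + 1), b j), sum_range_succ b (n + 1),
      log_div (add_pos_of_pos_of_nonneg hS (hb _)).ne' h0.ne']
    rw [log_div hS.ne' h0.ne'] at ih
    linarith

/-- Azar et al. prefix-sum inequality: for nonnegative reals `a 0, ..., a (m-1)`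
with `a 0 > 0`, the sum of `a i` divided by the prefix sum `a 0 + ... + a i`
is at most `1 + ln((a 0 + ... + a (m-1)) / a 0)`. -/
theorem stmt_0 (m : ℕ) (hm : 0 < m) (a : Fin m → ℝ)
    (ha : ∀ i, 0 ≤ a i) (ha1 : 0 < a ⟨0, hm⟩) :
    ∑ i : Fin m, a i / (∑ j ∈ Finset.Iic i, a j) ≤
      1 + Real.log ((∑ i : Fin m, a i) / a ⟨0, hm⟩) := by
  obtain ⟨n, rfl⟩ := Nat.exists_eq_add_one_of_ne_zero hm.ne'
  set b : ℕ → ℝ := fun k ↦ if h : k < n + 1 then a ⟨k, h⟩ else 0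
  have hab (i : Fin (n + 1)) : a i = b i := by simp only [b, dif_pos i.isLt]
  have hb (k : ℕ) : 0 ≤ b k := by
    simp only [b]
    split_ifs
    exacts [ha _, le_rfl]
  have hprefix (i : Fin (n + 1)) : ∑ j ∈ Iic i, a j = ∑ j ∈ range (i + 1), b j := by
    rw [Nat.range_succ_eq_Iic, ← Fin.map_valEmbedding_Iic, sum_map]
    exact sum_congr rfl fun j _ ↦ hab j
  simp_rw [hprefix, hab] at ha1 ⊢
  rw [Fin.sum_univ_eq_sum_range (fun i ↦ b i / ∑ j ∈ range (i + 1), b j), Fin.sum_univ_eq_sum_range]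
  exact sum_range_div_sum_range_le_one_add_log b hb ha1 n
end

section
/- Let m, d be positive integers, let c : {1,...,m} × {1,...,d} → ℝ be a matrix of nonnegative coefficients, and for x ∈ ℝ^d define α_k(x) = Σ_{j=1}^d c(k,j)·x_j and rate_j(x) = (Σ_{k=1}^m c(k,j)·exp(α_k(x))) / (Σ_{k=1}^m exp(α_k(x))). Set μ = 1 + 1/(3·ln(e·m)). If x, x' ∈ ℝ^d have nonnegative entries with x_j ≤ x'_j ≤ μ·x_j for every j, and max_{1≤k≤m} α_k(x) ≤ 3·ln(e·m), then rate_j(x') ≤ e · rate_j(x) for every j. -/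
/-- Rate-comparison lemma: for a nonnegative linear packing system with
`α_k(x) = Σ_j c k j · x j` and
`rate_j(x) = (Σ_k c k j · exp(α_k(x))) / (Σ_k exp(α_k(x)))`, if
`x_j ≤ x'_j ≤ μ·x_j` for `μ = 1 + 1/(3·ln(e·m))` and all constraint values at
`x` are at most `3·ln(e·m)`, then `rate_j(x') ≤ e · rate_j(x)` for every `j`. -/
theorem stmt_5 (m d : ℕ) (hm : 0 < m) (hd : 0 < d)
    (c : Fin m → Fin d → ℝ) (hc : ∀ k j, 0 ≤ c k j)
    (α : (Fin d → ℝ) → Fin m → ℝ)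
    (hα : ∀ x k, α x k = ∑ j : Fin d, c k j * x j)
    (rate : (Fin d → ℝ) → Fin d → ℝ)
    (hrate : ∀ x j, rate x j =
      (∑ k : Fin m, c k j * Real.exp (α x k)) / (∑ k : Fin m, Real.exp (α x k)))
    (μ : ℝ) (hμ : μ = 1 + 1 / (3 * Real.log (Real.exp 1 * m)))
    (x x' : Fin d → ℝ) (hx : ∀ j, 0 ≤ x j) (hx' : ∀ j, 0 ≤ x' j)
    (hle : ∀ j, x j ≤ x' j) (hle' : ∀ j, x' j ≤ μ * x j)
    (hmax : ∀ k, α x k ≤ 3 * Real.log (Real.exp 1 * m)) :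
    ∀ j, rate x' j ≤ Real.exp 1 * rate x j := by
  intro j
  haveI : Nonempty (Fin m) := Fin.pos_iff_nonempty.mp hm
  have hm1 : (1:ℝ) ≤ m := by exact_mod_cast hm
  set L := Real.log (Real.exp 1 * m) with hLdef
  have hL1 : 1 ≤ L := by
    rw [hLdef, Real.log_mul (Real.exp_ne_zero 1) (by positivity), Real.log_exp]
    nlinarith [Real.log_nonneg hm1]
  have hLpos : 0 < L := lt_of_lt_of_le one_pos hL1
  have hμd : μ - 1 = 1 / (3 * L) := by rw [hμ]; ring
  have hμ1 : 0 < μ - 1 := by rw [hμd]; positivity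
  have hαx : ∀ k, 0 ≤ α x k := fun k => by
    rw [hα]; exact Finset.sum_nonneg fun i _ => mul_nonneg (hc k i) (hx i)
  have hkey : ∀ k, Real.exp (α x' k) ≤ Real.exp 1 * Real.exp (α x k) := by
    intro k
    have h1 : α x' k ≤ μ * α x k := by
      rw [hα, hα, Finset.mul_sum]
      refine Finset.sum_le_sum fun i _ => ?_
      have h := hle' i
      have := hc k i
      nlinarith
    have h2 : α x' k ≤ 1 + α x k := by
      have hb : (μ - 1) * α x k ≤ (μ - 1) * (3 * L) :=
        mul_le_mul_of_nonneg_left (hmax k) (le_of_lt hμ1)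
      have he : (μ - 1) * (3 * L) = 1 := by
        rw [hμd]; field_simp
      nlinarith
    calc Real.exp (α x' k) ≤ Real.exp (1 + α x k) := Real.exp_le_exp.mpr h2
      _ = Real.exp 1 * Real.exp (α x k) := Real.exp_add 1 _
  have hmono : ∀ k, Real.exp (α x k) ≤ Real.exp (α x' k) := fun k =>
    Real.exp_le_exp.mpr (by
      rw [hα, hα]
      exact Finset.sum_le_sum fun i _ => mul_le_mul_of_nonneg_left (hle i) (hc k i))
  have hdenpos : 0 < ∑ k : Fin m, Real.exp (α x k) :=
    Finset.sum_pos (fun k _ => Real.exp_pos _) Finset.univ_nonempty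
  have hden' : (∑ k : Fin m, Real.exp (α x k)) ≤ ∑ k : Fin m, Real.exp (α x' k) :=
    Finset.sum_le_sum fun k _ => hmono k
  have hnum' : (∑ k : Fin m, c k j * Real.exp (α x' k)) ≤
      Real.exp 1 * ∑ k : Fin m, c k j * Real.exp (α x k) := by
    rw [Finset.mul_sum]
    refine Finset.sum_le_sum fun k _ => ?_
    have := hkey k
    have := hc k j
    nlinarith [Real.exp_pos (α x k)]
  have hnn : 0 ≤ Real.exp 1 * ∑ k : Fin m, c k j * Real.exp (α x k) := by
    have : 0 ≤ ∑ k : Fin m, c k j * Real.exp (α x k) :=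
      Finset.sum_nonneg fun k _ => mul_nonneg (hc k j) (Real.exp_pos _).le
    positivity
  rw [hrate, hrate]
  calc (∑ k : Fin m, c k j * Real.exp (α x' k)) / (∑ k : Fin m, Real.exp (α x' k))
      ≤ (Real.exp 1 * ∑ k : Fin m, c k j * Real.exp (α x k)) /
        (∑ k : Fin m, Real.exp (α x k)) := div_le_div₀ hnn hnum' hdenpos hden'
    _ = Real.exp 1 * ((∑ k : Fin m, c k j * Real.exp (α x k)) /
        (∑ k : Fin m, Real.exp (α x k))) := mul_div_assoc _ _ _
end

section
/- Let m, d be positive integers, let c : {1,...,m} × {1,...,d} → ℝ be a matrix of nonnegative coefficients, and for x ∈ ℝ^d define α_k(x) = Σ_{j=1}^d c(k,j)·x_j, Φ(x) = ln(Σ_{k=1}^m exp(α_k(x))), and rate_j(x) = (Σ_{k=1}^m c(k,j)·exp(α_k(x))) / (Σ_{k=1}^m exp(α_k(x))). Set μ = 1 + 1/(3·ln(e·m)). If x, x' ∈ ℝ^d have nonnegative entries with x_j ≤ x'_j ≤ μ·x_j for every j, and max_{1≤k≤m} α_k(x) ≤ 3·ln(e·m), then Φ(x') − Φ(x) ≤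 e · Σ_{j=1}^d rate_j(x)·(x'_j − x_j). -/
/-! The bound `log t ≤ t - 1` reduces the increase of `Φ` to
`(Σ_k (e^{α_k(x')} - e^{α_k(x)})) / Σ_k e^{α_k(x)}`. Since `α_k(x') ≤ μ α_k(x)` and
`α_k(x) ≤ 3 ln(e m)`, each constraint grows by at most `1`, so by convexity
`e^{α_k(x')} - e^{α_k(x)} ≤ e^{α_k(x')} (α_k(x') - α_k(x)) ≤ e · e^{α_k(x)} (α_k(x') - α_k(x))`.
Expanding `α_k(x') - α_k(x) = Σ_j c(k,j) (x'_j - x_j)` and exchanging the sums gives the rates. -/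

open Finset

namespace Real

theorem exp_sub_exp_le_exp_mul_sub (a b : ℝ) : exp b - exp a ≤ exp b * (b - a) := by
  have h := add_one_le_exp (a - b)
  calc exp b - exp a = exp b * (1 - exp (a - b)) := by rw [exp_sub]; field_simp
    _ ≤ exp b * (b - a) := mul_le_mul_of_nonneg_left (by linarith) (exp_pos b).le

theorem exp_sub_exp_le_exp_one_mul {a b : ℝ} (hab : a ≤ b) (hba : b ≤ a + 1) :
    exp b - exp a ≤ exp 1 * exp a * (b - a) :=
  calc exp b - exp a ≤ exp b * (b - a) := exp_sub_exp_le_exp_mul_sub a b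
    _ ≤ exp (1 + a) * (b - a) := by gcongr; linarith
    _ = exp 1 * exp a * (b - a) := by rw [exp_add]

theorem log_sum_exp_sub_le {ι : Type*} {s : Finset ι} (hs : s.Nonempty) {a b : ι → ℝ}
    (hab : ∀ k ∈ s, a k ≤ b k) (hba : ∀ k ∈ s, b k ≤ a k + 1) :
    log (∑ k ∈ s, exp (b k)) - log (∑ k ∈ s, exp (a k)) ≤
      exp 1 * (∑ k ∈ s, exp (a k) * (b k - a k)) / ∑ k ∈ s, exp (a k) := by
  have hA : 0 < ∑ k ∈ s, exp (a k) := sum_pos (fun k _ => exp_pos _) hs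
  have hB : 0 < ∑ k ∈ s, exp (b k) := sum_pos (fun k _ => exp_pos _) hs
  calc log (∑ k ∈ s, exp (b k)) - log (∑ k ∈ s, exp (a k))
      = log ((∑ k ∈ s, exp (b k)) / ∑ k ∈ s, exp (a k)) := (log_div hB.ne' hA.ne').symm
    _ ≤ (∑ k ∈ s, exp (b k)) / (∑ k ∈ s, exp (a k)) - 1 := log_le_sub_one_of_pos (div_pos hB hA)
    _ = (∑ k ∈ s, (exp (b k) - exp (a k))) / ∑ k ∈ s, exp (a k) := by
        rw [sum_sub_distrib, sub_div, div_self hA.ne']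
    _ ≤ (∑ k ∈ s, exp 1 * exp (a k) * (b k - a k)) / ∑ k ∈ s, exp (a k) := by
        gcongr with k hk
        exact exp_sub_exp_le_exp_one_mul (hab k hk) (hba k hk)
    _ = exp 1 * (∑ k ∈ s, exp (a k) * (b k - a k)) / ∑ k ∈ s, exp (a k) := by
        simp only [mul_sum, mul_assoc]

end Real

theorem le_add_one_of_le_one_add_inv_mul {a b t : ℝ} (ht : 0 < t) (hat : a ≤ t)
    (hb : b ≤ (1 + 1 / t) * a) : b ≤ a + 1 := by
  have : 1 / t * a ≤ 1 := by rw [div_mul_eq_mul_div, one_mul, div_le_one ht]; exact hat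
  linarith [add_mul 1 (1 / t) a]

theorem sum_mul_sum_sub_sum {ι κ : Type*} [Fintype ι] [Fintype κ] (w : ι → ℝ)
    (c : ι → κ → ℝ) (y z : κ → ℝ) :
    ∑ k, w k * (∑ j, c k j * y j - ∑ j, c k j * z j) =
      ∑ j, (∑ k, c k j * w k) * (y j - z j) := by
  simp only [← sum_sub_distrib, ← mul_sub, mul_sum, sum_mul]
  rw [sum_comm]
  exact sum_congr rfl fun _ _ => sum_congr rfl fun _ _ => by ring

theorem stmt_6_general (m d : ℕ) (hm : 0 < m)
    (c : Fin m → Fin d → ℝ) (hc : ∀ k j, 0 ≤ c k j)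
    (α : (Fin d → ℝ) → Fin m → ℝ)
    (hα : ∀ x k, α x k = ∑ j : Fin d, c k j * x j)
    (Φ : (Fin d → ℝ) → ℝ)
    (hΦ : ∀ x, Φ x = Real.log (∑ k : Fin m, Real.exp (α x k)))
    (rate : (Fin d → ℝ) → Fin d → ℝ)
    (hrate : ∀ x j, rate x j =
      (∑ k : Fin m, c k j * Real.exp (α x k)) / (∑ k : Fin m, Real.exp (α x k)))
    (μ : ℝ) (hμ : μ = 1 + 1 / (3 * Real.log (Real.exp 1 * m)))
    (x x' : Fin d → ℝ)
    (hle : ∀ j, x j ≤ x' j) (hle' : ∀ j, x' j ≤ μ * x j)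
    (hmax : ∀ k, α x k ≤ 3 * Real.log (Real.exp 1 * m)) :
    Φ x' - Φ x ≤ Real.exp 1 * ∑ j : Fin d, rate x j * (x' j - x j) := by
  have hL : 0 < 3 * Real.log (Real.exp 1 * m) := by
    have : (1 : ℝ) ≤ m := by exact_mod_cast hm
    have := Real.add_one_le_exp 1
    exact mul_pos three_pos (Real.log_pos (by nlinarith))
  have hmono : ∀ k ∈ univ, α x k ≤ α x' k := fun k _ => by
    simp only [hα]
    exact sum_le_sum fun j _ => mul_le_mul_of_nonneg_left (hle j) (hc k j)
  have hgap : ∀ k ∈ univ, α x' k ≤ α x k + 1 := fun k _ => by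
    refine le_add_one_of_le_one_add_inv_mul hL (hmax k) ?_
    rw [← hμ, hα, hα, mul_sum]
    exact sum_le_sum fun j _ => by
      linarith [mul_le_mul_of_nonneg_left (hle' j) (hc k j)]
  have hne : (univ : Finset (Fin m)).Nonempty := univ_nonempty_iff.mpr ⟨⟨0, hm⟩⟩
  calc Φ x' - Φ x ≤ Real.exp 1 * (∑ k, Real.exp (α x k) * (α x' k - α x k)) /
        ∑ k, Real.exp (α x k) := by
        rw [hΦ, hΦ]; exact Real.log_sum_exp_sub_le hne hmono hgap
    _ = Real.exp 1 * ∑ j, rate x j * (x' j - x j) := by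
        have hdiff : ∀ k, α x' k - α x k = ∑ j, c k j * x' j - ∑ j, c k j * x j :=
          fun k => by rw [hα, hα]
        simp only [hdiff, sum_mul_sum_sub_sum, hrate]
        rw [mul_div_assoc, sum_div]
        exact congrArg _ (sum_congr rfl fun _ _ => by ring)

/-- Single-phase potential-increase bound: with the log-sum-exp potential
`Φ(x) = ln(Σ_k exp(α_k(x)))` of a nonnegative linear packing system and
`rate_j(x)` its partial derivatives, if `x_j ≤ x'_j ≤ μ·x_j` for
`μ = 1 + 1/(3·ln(e·m))`, and all constraint values at `x` are at most
`3·ln(e·m)`, then `Φ(x') − Φ(x) ≤ e · Σ_j rate_j(x)·(x'_j − x_j)`. -/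
theorem stmt_6 (m d : ℕ) (hm : 0 < m) (hd : 0 < d)
    (c : Fin m → Fin d → ℝ) (hc : ∀ k j, 0 ≤ c k j)
    (α : (Fin d → ℝ) → Fin m → ℝ)
    (hα : ∀ x k, α x k = ∑ j : Fin d, c k j * x j)
    (Φ : (Fin d → ℝ) → ℝ)
    (hΦ : ∀ x, Φ x = Real.log (∑ k : Fin m, Real.exp (α x k)))
    (rate : (Fin d → ℝ) → Fin d → ℝ)
    (hrate : ∀ x j, rate x j =
      (∑ k : Fin m, c k j * Real.exp (α x k)) / (∑ k : Fin m, Real.exp (α x k)))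
    (μ : ℝ) (hμ : μ = 1 + 1 / (3 * Real.log (Real.exp 1 * m)))
    (x x' : Fin d → ℝ) (hx : ∀ j, 0 ≤ x j) (hx' : ∀ j, 0 ≤ x' j)
    (hle : ∀ j, x j ≤ x' j) (hle' : ∀ j, x' j ≤ μ * x j)
    (hmax : ∀ k, α x k ≤ 3 * Real.log (Real.exp 1 * m)) :
    Φ x' - Φ x ≤ Real.exp 1 * ∑ j : Fin d, rate x j * (x' j - x j) :=
  stmt_6_general m d hm c hc α hα Φ hΦ rate hrate μ hμ x x' hle hle' hmax
end
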